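/- arXiv:2410.08850 — 3 statements merged into one kernel-verified Lean document; each statement's English description precedes it below -/
import Mathlib

section
/- Let X be a finite set, S := X × {0,1} the extended state space, and T a time horizon. For every time n ∈ {0,…,T−1} and every probability distribution ν on S, the value function satisfies the dynamic programming principle: V_T(ν) = Σ_{x∈X} ν(x,1) Φ(x, ν_X), and for every n < T, V_n(ν) = inf over stopping rules h : X → [0,1] of [ Σ_{x∈X} ν(x,1) Φ(x, ν_X) h(x) + V_{n+1}(F̄_n(ν, h)) ]. -/
/-!
Dynamic programming principle (DPP) for discrete-time, finite-space mean-field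
optimal stopping with state-dependent (asynchronous) randomized stopping rules.
-/

namespace MFOSDPP

variable {X : Type*} [Fintype X]

/-- A probability distribution on a finite type, represented as a nonnegative
function summing to one. -/
def IsProb {S : Type*} [Fintype S] (ν : S → ℝ) : Prop :=
  (∀ s, 0 ≤ ν s) ∧ ∑ s, ν s = 1

/-- First marginal `ν_X(x) = ν(x,0) + ν(x,1)` of a distribution on the extended
state space `S = X × {0,1}` (here `false` plays the role of `0`, i.e. "stopped",
and `true` the role of `1`, i.e. "alive"). -/
def margX (ν : X × Bool → ℝ) (x : X) : ℝ := ν (x, false) + ν (x, true)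

/-- The mean-field transition `F̄_n(ν,h)`:
`F̄_n(ν,h)(x,0) = ν(x,0) + ν(x,1) h(x)` and
`F̄_n(ν,h)(x,1) = Σ_z ν(z,1) q^{n,ν}_{z,x} (1 - h(z))`. -/
def Fbar (q : ℕ → (X × Bool → ℝ) → X → X → ℝ) (n : ℕ)
    (ν : X × Bool → ℝ) (h : X → ℝ) : X × Bool → ℝ
  | (x, false) => ν (x, false) + ν (x, true) * h x
  | (x, true) => ∑ z, ν (z, true) * q n ν z x * (1 - h z)

/-- The trajectory started at time `n` from distribution `ν` under the policy `p`:
`traj q p n ν k` is the distribution at time `n + k`. -/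
def traj (q : ℕ → (X × Bool → ℝ) → X → X → ℝ) (p : ℕ → X → ℝ)
    (n : ℕ) (ν : X × Bool → ℝ) : ℕ → X × Bool → ℝ
  | 0 => ν
  | k + 1 => Fbar q (n + k) (traj q p n ν k) (p (n + k))

/-- One-step stopping cost `Σ_x ν(x,1) Φ(x, ν_X) h(x)`. -/
def stopCost (Φ : X → (X → ℝ) → ℝ) (ν : X × Bool → ℝ) (h : X → ℝ) : ℝ :=
  ∑ x, ν (x, true) * Φ x (margX ν) * h x

/-- A policy starting at time `n` with horizon `T`: stopping probabilities in `[0,1]`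
on `{n,…,T}` with `p_T ≡ 1`. -/
def IsPolicy (T n : ℕ) (p : ℕ → X → ℝ) : Prop :=
  (∀ m ∈ Finset.Icc n T, ∀ x, p m x ∈ Set.Icc (0 : ℝ) 1) ∧ ∀ x, p T x = 1

/-- Total cost of policy `p` started at time `n` from `ν`:
`Σ_{m=n}^{T} Σ_x ν_m(x,1) Φ(x, (ν_m)_X) p_m(x)`. -/
def J (q : ℕ → (X × Bool → ℝ) → X → X → ℝ) (Φ : X → (X → ℝ) → ℝ)
    (T n : ℕ) (ν : X × Bool → ℝ) (p : ℕ → X → ℝ) : ℝ :=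
  ∑ m ∈ Finset.Icc n T, stopCost Φ (traj q p n ν (m - n)) (p m)

/-- The value function `V_n(ν)`, infimum of the total cost over all policies. -/
noncomputable def V (q : ℕ → (X × Bool → ℝ) → X → X → ℝ) (Φ : X → (X → ℝ) → ℝ)
    (T n : ℕ) (ν : X × Bool → ℝ) : ℝ :=
  sInf {r | ∃ p : ℕ → X → ℝ, IsPolicy T n p ∧ J q Φ T n ν p = r}

section Aux

variable (q : ℕ → (X × Bool → ℝ) → X → X → ℝ) (Φ : X → (X → ℝ) → ℝ)

@[simp] lemma Fbar_false (n : ℕ) (ν : X × Bool → ℝ) (h : X → ℝ) (x : X) :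
    Fbar q n ν h (x, false) = ν (x, false) + ν (x, true) * h x := rfl

@[simp] lemma Fbar_true (n : ℕ) (ν : X × Bool → ℝ) (h : X → ℝ) (x : X) :
    Fbar q n ν h (x, true) = ∑ z, ν (z, true) * q n ν z x * (1 - h z) := rfl

lemma sum_prod_bool (f : X × Bool → ℝ) :
    ∑ s : X × Bool, f s = ∑ x, (f (x, false) + f (x, true)) := by
  rw [Fintype.sum_prod_type]
  exact Finset.sum_congr rfl fun x _ => by rw [Fintype.sum_bool]; ring

lemma isProb_nonempty {ν : X × Bool → ℝ} (hν : IsProb ν) : Nonempty X := by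
  by_contra hX
  rw [not_nonempty_iff] at hX
  have h2 := hν.2
  rw [sum_prod_bool, Finset.univ_eq_empty, Finset.sum_empty] at h2
  norm_num at h2

lemma margX_nonneg {ν : X × Bool → ℝ} (hν : IsProb ν) : ∀ y, 0 ≤ margX ν y :=
  fun _ => add_nonneg (hν.1 _) (hν.1 _)

lemma margX_sum {ν : X × Bool → ℝ} (hν : IsProb ν) : ∑ y, margX ν y = 1 := by
  rw [show (∑ y, margX ν y) = ∑ y, (ν (y, false) + ν (y, true)) from rfl, ← sum_prod_bool]
  exact hν.2

lemma sum_true_le_one {ν : X × Bool → ℝ} (hν : IsProb ν) : ∑ x, ν (x, true) ≤ 1 := by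
  have h2 := hν.2
  rw [sum_prod_bool, Finset.sum_add_distrib] at h2
  have : 0 ≤ ∑ x, ν (x, false) := Finset.sum_nonneg fun x _ => hν.1 _
  linarith

variable {C : ℝ}

lemma C_nonneg (hC : ∀ x (μ : X → ℝ), (∀ y, 0 ≤ μ y) → ∑ y, μ y = 1 → |Φ x μ| ≤ C)
    {ν : X × Bool → ℝ} (hν : IsProb ν) : 0 ≤ C := by
  obtain ⟨x⟩ := isProb_nonempty hν
  exact le_trans (abs_nonneg _) (hC x (margX ν) (margX_nonneg hν) (margX_sum hν))

lemma isProb_fbar (hq0 : ∀ n ν z x, 0 ≤ q n ν z x) (hq1 : ∀ n ν z, ∑ x, q n ν z x = 1)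
    {n : ℕ} {ν : X × Bool → ℝ} {h : X → ℝ} (hν : IsProb ν)
    (hh : ∀ x, h x ∈ Set.Icc (0 : ℝ) 1) : IsProb (Fbar q n ν h) := by
  constructor
  · rintro ⟨x, b⟩
    cases b
    · exact add_nonneg (hν.1 _) (mul_nonneg (hν.1 _) (hh x).1)
    · exact Finset.sum_nonneg fun z _ =>
        mul_nonneg (mul_nonneg (hν.1 _) (hq0 n ν z x)) (by linarith [(hh z).2])
  · have htrue : ∑ x, Fbar q n ν h (x, true) = ∑ z, ν (z, true) * (1 - h z) := by
      simp only [Fbar_true]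
      rw [Finset.sum_comm]
      refine Finset.sum_congr rfl fun z _ => ?_
      have hz : ∑ x, ν (z, true) * q n ν z x * (1 - h z)
          = (ν (z, true) * (1 - h z)) * ∑ x, q n ν z x := by
        rw [Finset.mul_sum]; exact Finset.sum_congr rfl fun x _ => by ring
      rw [hz, hq1, mul_one]
    rw [sum_prod_bool, Finset.sum_add_distrib, htrue]
    have h1 : ∑ x, (ν (x, false) + ν (x, true)) = 1 := by rw [← sum_prod_bool]; exact hν.2
    calc (∑ x, Fbar q n ν h (x, false)) + ∑ z, ν (z, true) * (1 - h z)
        = ∑ x, (ν (x, false) + ν (x, true)) := by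
          simp only [Fbar_false]
          rw [← Finset.sum_add_distrib]
          exact Finset.sum_congr rfl fun x _ => by ring
      _ = 1 := h1

lemma traj_isProb (hq0 : ∀ n ν z x, 0 ≤ q n ν z x) (hq1 : ∀ n ν z, ∑ x, q n ν z x = 1)
    {T n : ℕ} {p : ℕ → X → ℝ} {ν : X × Bool → ℝ} (hν : IsProb ν)
    (hp : ∀ m ∈ Finset.Icc n T, ∀ x, p m x ∈ Set.Icc (0 : ℝ) 1) :
    ∀ k, n + k ≤ T → IsProb (traj q p n ν k)
  | 0, _ => hν
  | k + 1, hk => by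
    have ih := traj_isProb hq0 hq1 hν hp k (by omega)
    exact isProb_fbar q hq0 hq1 ih
      (fun x => hp (n + k) (Finset.mem_Icc.mpr ⟨by omega, by omega⟩) x)

lemma traj_congr {p p' : ℕ → X → ℝ} {n : ℕ} (ν : X × Bool → ℝ)
    (hpp : ∀ m, n ≤ m → p m = p' m) : ∀ k, traj q p n ν k = traj q p' n ν k
  | 0 => rfl
  | k + 1 => by
    show Fbar q (n + k) (traj q p n ν k) (p (n + k))
        = Fbar q (n + k) (traj q p' n ν k) (p' (n + k))
    rw [traj_congr ν hpp k, hpp (n + k) (by omega)]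

lemma traj_shift (p : ℕ → X → ℝ) (n : ℕ) (ν : X × Bool → ℝ) :
    ∀ k, traj q p (n + 1) (Fbar q n ν (p n)) k = traj q p n ν (k + 1)
  | 0 => rfl
  | k + 1 => by
    show Fbar q (n + 1 + k) (traj q p (n + 1) (Fbar q n ν (p n)) k) (p (n + 1 + k))
        = Fbar q (n + (k + 1)) (traj q p n ν (k + 1)) (p (n + (k + 1)))
    rw [traj_shift p n ν k, show n + 1 + k = n + (k + 1) by omega]

lemma J_step {T n : ℕ} (hn : n < T) (ν : X × Bool → ℝ) (p : ℕ → X → ℝ) :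
    J q Φ T n ν p = stopCost Φ ν (p n) + J q Φ T (n + 1) (Fbar q n ν (p n)) p := by
  unfold J
  have hins : Finset.Icc n T = insert n (Finset.Icc (n + 1) T) := by
    ext m; simp only [Finset.mem_Icc, Finset.mem_insert]; omega
  have hnot : n ∉ Finset.Icc (n + 1) T := by simp
  rw [hins, Finset.sum_insert hnot]
  congr 1
  · simp [traj]
  · refine Finset.sum_congr rfl fun m hm => ?_
    rw [Finset.mem_Icc] at hm
    rw [traj_shift, show m - (n + 1) + 1 = m - n by omega]

lemma J_congr {T n : ℕ} {p p' : ℕ → X → ℝ} (ν : X × Bool → ℝ)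
    (hpp : ∀ m, n ≤ m → p m = p' m) : J q Φ T n ν p = J q Φ T n ν p' := by
  unfold J
  refine Finset.sum_congr rfl fun m hm => ?_
  rw [Finset.mem_Icc] at hm
  rw [traj_congr q ν hpp, hpp m hm.1]

lemma isPolicy_one (T n : ℕ) : IsPolicy T n (fun _ (_ : X) => (1 : ℝ)) :=
  ⟨fun _ _ _ => ⟨zero_le_one, le_refl 1⟩, fun _ => rfl⟩

lemma stopCost_ge (hC : ∀ x (μ : X → ℝ), (∀ y, 0 ≤ μ y) → ∑ y, μ y = 1 → |Φ x μ| ≤ C)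
    {ν : X × Bool → ℝ} {h : X → ℝ} (hν : IsProb ν)
    (hh : ∀ x, h x ∈ Set.Icc (0 : ℝ) 1) : -C ≤ stopCost Φ ν h := by
  have hC0 : 0 ≤ C := C_nonneg Φ hC hν
  have key : ∀ x ∈ Finset.univ, -(C * ν (x, true)) ≤ ν (x, true) * Φ x (margX ν) * h x := by
    intro x _
    have hb := abs_le.mp (hC x (margX ν) (margX_nonneg hν) (margX_sum hν))
    have h1 := (hh x).1
    have h2 := (hh x).2
    have h3 := hν.1 (x, true)
    nlinarith [mul_nonneg h3 h1, mul_nonneg h3 (sub_nonneg.mpr h2)]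
  have hsum := Finset.sum_le_sum key
  have hle : ∑ x, ν (x, true) ≤ 1 := sum_true_le_one hν
  have : ∑ x, -(C * ν (x, true)) = -(C * ∑ x, ν (x, true)) := by
    rw [Finset.mul_sum, ← Finset.sum_neg_distrib]
  rw [this] at hsum
  have : -C ≤ -(C * ∑ x, ν (x, true)) := by nlinarith
  exact le_trans this hsum

lemma J_ge (hq0 : ∀ n ν z x, 0 ≤ q n ν z x) (hq1 : ∀ n ν z, ∑ x, q n ν z x = 1)
    (hC : ∀ x (μ : X → ℝ), (∀ y, 0 ≤ μ y) → ∑ y, μ y = 1 → |Φ x μ| ≤ C)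
    {T n : ℕ} {ν : X × Bool → ℝ} {p : ℕ → X → ℝ}
    (hν : IsProb ν) (hp : IsPolicy T n p) :
    -((T + 1 : ℝ) * C) ≤ J q Φ T n ν p := by
  have hC0 : 0 ≤ C := C_nonneg Φ hC hν
  have hterm : ∀ m ∈ Finset.Icc n T, -C ≤ stopCost Φ (traj q p n ν (m - n)) (p m) := by
    intro m hm
    have hm' := Finset.mem_Icc.mp hm
    have htr : IsProb (traj q p n ν (m - n)) :=
      traj_isProb q hq0 hq1 hν hp.1 (m - n) (by omega)
    exact stopCost_ge Φ hC htr (hp.1 m hm)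
  have hsum := Finset.sum_le_sum hterm
  rw [Finset.sum_const, nsmul_eq_mul] at hsum
  have hcard : ((Finset.Icc n T).card : ℝ) ≤ (T : ℝ) + 1 := by
    have : (Finset.Icc n T).card ≤ T + 1 := by rw [Nat.card_Icc]; omega
    exact_mod_cast this
  have hpos : (0 : ℝ) ≤ ((Finset.Icc n T).card : ℝ) := Nat.cast_nonneg _
  calc -((T + 1 : ℝ) * C) ≤ ((Finset.Icc n T).card : ℝ) * (-C) := by nlinarith
    _ ≤ J q Φ T n ν p := hsum

lemma V_nonempty (T n : ℕ) (ν : X × Bool → ℝ) :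
    {r | ∃ p : ℕ → X → ℝ, IsPolicy T n p ∧ J q Φ T n ν p = r}.Nonempty :=
  ⟨_, fun _ (_ : X) => (1 : ℝ), isPolicy_one T n, rfl⟩

lemma V_bddBelow (hq0 : ∀ n ν z x, 0 ≤ q n ν z x) (hq1 : ∀ n ν z, ∑ x, q n ν z x = 1)
    (hC : ∀ x (μ : X → ℝ), (∀ y, 0 ≤ μ y) → ∑ y, μ y = 1 → |Φ x μ| ≤ C)
    {T n : ℕ} {ν : X × Bool → ℝ} (hν : IsProb ν) :
    -((T + 1 : ℝ) * C) ∈ lowerBounds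
      {r | ∃ p : ℕ → X → ℝ, IsPolicy T n p ∧ J q Φ T n ν p = r} := by
  rintro r ⟨p, hp, rfl⟩
  exact J_ge q Φ hq0 hq1 hC hν hp

lemma V_ge (hq0 : ∀ n ν z x, 0 ≤ q n ν z x) (hq1 : ∀ n ν z, ∑ x, q n ν z x = 1)
    (hC : ∀ x (μ : X → ℝ), (∀ y, 0 ≤ μ y) → ∑ y, μ y = 1 → |Φ x μ| ≤ C)
    {T n : ℕ} {ν : X × Bool → ℝ} (hν : IsProb ν) :
    -((T + 1 : ℝ) * C) ≤ V q Φ T n ν :=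
  le_csInf (V_nonempty q Φ T n ν) (V_bddBelow q Φ hq0 hq1 hC hν)

end Aux

/-- **Dynamic Programming Principle** for mean-field optimal stopping:
`V_T(ν) = Σ_x ν(x,1) Φ(x, ν_X)` and, for `n < T`,
`V_n(ν) = inf_{h : X → [0,1]} [ Σ_x ν(x,1) Φ(x, ν_X) h(x) + V_{n+1}(F̄_n(ν,h)) ]`. -/
theorem dpp (q : ℕ → (X × Bool → ℝ) → X → X → ℝ) (Φ : X → (X → ℝ) → ℝ)
    (hq0 : ∀ n ν z x, 0 ≤ q n ν z x)
    (hq1 : ∀ n ν z, ∑ x, q n ν z x = 1)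
    (hΦ : ∃ C : ℝ, ∀ x (μ : X → ℝ), (∀ y, 0 ≤ μ y) → ∑ y, μ y = 1 → |Φ x μ| ≤ C)
    (T : ℕ) :
    (∀ ν : X × Bool → ℝ, IsProb ν →
      V q Φ T T ν = ∑ x, ν (x, true) * Φ x (margX ν)) ∧
    (∀ n, n < T → ∀ ν : X × Bool → ℝ, IsProb ν →
      V q Φ T n ν =
        sInf {r | ∃ h : X → ℝ, (∀ x, h x ∈ Set.Icc (0 : ℝ) 1) ∧
          stopCost Φ ν h + V q Φ T (n + 1) (Fbar q n ν h) = r}) := by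
  obtain ⟨C, hC⟩ := hΦ
  constructor
  · intro ν hν
    have hset : {r | ∃ p : ℕ → X → ℝ, IsPolicy T T p ∧ J q Φ T T ν p = r}
        = {∑ x, ν (x, true) * Φ x (margX ν)} := by
      ext r
      simp only [Set.mem_setOf_eq, Set.mem_singleton_iff]
      constructor
      · rintro ⟨p, hp, rfl⟩
        unfold J
        rw [Finset.Icc_self, Finset.sum_singleton, Nat.sub_self]
        unfold stopCost
        refine Finset.sum_congr rfl fun x _ => ?_
        rw [show traj q p T ν 0 = ν from rfl, hp.2 x, mul_one]
      · rintro rfl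
        refine ⟨fun _ _ => 1, isPolicy_one T T, ?_⟩
        unfold J
        rw [Finset.Icc_self, Finset.sum_singleton, Nat.sub_self]
        unfold stopCost
        exact Finset.sum_congr rfl fun x _ =>
          by rw [show traj q (fun _ _ => (1:ℝ)) T ν 0 = ν from rfl, mul_one]
    show sInf _ = _
    rw [hset, csInf_singleton]
  · intro n hn ν hν
    set A := {r | ∃ p : ℕ → X → ℝ, IsPolicy T n p ∧ J q Φ T n ν p = r} with hA
    set B := {r | ∃ h : X → ℝ, (∀ x, h x ∈ Set.Icc (0 : ℝ) 1) ∧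
        stopCost Φ ν h + V q Φ T (n + 1) (Fbar q n ν h) = r} with hB
    have hVA : V q Φ T n ν = sInf A := rfl
    have hBne : B.Nonempty :=
      ⟨_, fun _ => 1, fun _ => ⟨zero_le_one, le_refl 1⟩, rfl⟩
    have hAne := V_nonempty q Φ T n ν
    have hAbdd : BddBelow A := ⟨_, V_bddBelow q Φ hq0 hq1 hC hν⟩
    have hBbdd : BddBelow B := by
      refine ⟨-C + -((T + 1 : ℝ) * C), ?_⟩
      rintro r ⟨h, hh, rfl⟩
      have hμ : IsProb (Fbar q n ν h) := isProb_fbar q hq0 hq1 hν hh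
      exact add_le_add (stopCost_ge Φ hC hν hh) (V_ge q Φ hq0 hq1 hC hμ)
    rw [hVA]
    apply le_antisymm
    · refine le_csInf hBne ?_
      rintro b ⟨h, hh, rfl⟩
      have hμ : IsProb (Fbar q n ν h) := isProb_fbar q hq0 hq1 hν hh
      refine le_of_forall_pos_le_add fun ε hε => ?_
      have hV : V q Φ T (n + 1) (Fbar q n ν h) < V q Φ T (n + 1) (Fbar q n ν h) + ε := by
        linarith
      obtain ⟨r, ⟨p', hp', hr⟩, hrlt⟩ :=
        exists_lt_of_csInf_lt (V_nonempty q Φ T (n + 1) (Fbar q n ν h)) hV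
      set p : ℕ → X → ℝ := fun m x => if m = n then h x else p' m x with hpdef
      have hpn : p n = h := by funext x; simp [hpdef]
      have hpolicy : IsPolicy T n p := by
        constructor
        · intro m hm x
          by_cases hmn : m = n
          · simpa [hpdef, hmn] using hh x
          · have hm' := Finset.mem_Icc.mp hm
            simp only [hpdef, if_neg hmn]
            exact hp'.1 m (Finset.mem_Icc.mpr ⟨by omega, hm'.2⟩) x
        · intro x
          have hTn : T ≠ n := by omega
          simp only [hpdef, if_neg hTn]
          exact hp'.2 x
      have hJp : J q Φ T n ν p
          = stopCost Φ ν h + J q Φ T (n + 1) (Fbar q n ν h) p' := by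
        rw [J_step q Φ hn, hpn]
        congr 1
        refine J_congr q Φ _ fun m hm => ?_
        funext x
        simp [hpdef, show m ≠ n by omega]
      have hmem : J q Φ T n ν p ∈ A := ⟨p, hpolicy, rfl⟩
      calc sInf A ≤ J q Φ T n ν p := csInf_le hAbdd hmem
        _ = stopCost Φ ν h + J q Φ T (n + 1) (Fbar q n ν h) p' := hJp
        _ ≤ stopCost Φ ν h + V q Φ T (n + 1) (Fbar q n ν h) + ε := by
            have : J q Φ T (n + 1) (Fbar q n ν h) p'
                < V q Φ T (n + 1) (Fbar q n ν h) + ε := hr ▸ hrlt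
            linarith
    · refine le_csInf hAne ?_
      rintro a ⟨p, hp, rfl⟩
      have hpn01 : ∀ x, p n x ∈ Set.Icc (0 : ℝ) 1 :=
        fun x => hp.1 n (Finset.mem_Icc.mpr ⟨le_refl n, by omega⟩) x
      have hμ : IsProb (Fbar q n ν (p n)) := isProb_fbar q hq0 hq1 hν hpn01
      have hp' : IsPolicy T (n + 1) p := by
        refine ⟨fun m hm x => hp.1 m ?_ x, hp.2⟩
        have hm' := Finset.mem_Icc.mp hm
        exact Finset.mem_Icc.mpr ⟨by omega, hm'.2⟩
      have hVle : V q Φ T (n + 1) (Fbar q n ν (p n))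
          ≤ J q Φ T (n + 1) (Fbar q n ν (p n)) p :=
        csInf_le ⟨_, V_bddBelow q Φ hq0 hq1 hC hμ⟩ ⟨p, hp', rfl⟩
      have hbB : stopCost Φ ν (p n) + V q Φ T (n + 1) (Fbar q n ν (p n)) ∈ B :=
        ⟨p n, hpn01, rfl⟩
      calc sInf B ≤ stopCost Φ ν (p n) + V q Φ T (n + 1) (Fbar q n ν (p n)) :=
            csInf_le hBbdd hbB
        _ ≤ stopCost Φ ν (p n) + J q Φ T (n + 1) (Fbar q n ν (p n)) p := by linarith
        _ = J q Φ T n ν p := (J_step q Φ hn ν p).symm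

end MFOSDPP
end

section
/- Let S be a finite set with |S| = K ≥ 1, let μ be a probability distribution on S, and let Y_1, …, Y_N be independent S-valued random variables each with law μ. Let μ̂_N := (1/N) Σ_{i=1}^N δ_{Y_i} be the empirical distribution. Then E[ ‖μ̂_N − μ‖ ] ≤ √(K − 1) / (2√N). -/
/-!
For each `y`, the count `N μ̂_N(y)` is a sum of `N` independent Bernoulli(`μ y`) variables, so
`Var μ̂_N(y) = μ y (1 - μ y) / N` and, by `(E|Z|)² ≤ E Z²`,
`E|μ̂_N(y) - μ y| ≤ √(μ y (1 - μ y)) / √N`. Summing over `y`, Cauchy–Schwarz gives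
`∑_y √(μ y) √(1 - μ y) ≤ √(∑_y μ y) √(∑_y (1 - μ y)) = √(K - 1)`.
-/

open MeasureTheory ProbabilityTheory

namespace EmpiricalTV

/-- Total variation distance between two (densities of) distributions on a finite set:
`‖μ − ν‖ := (1/2) Σ_y |μ(y) − ν(y)|`. -/
noncomputable def tv {S : Type*} [Fintype S] (μ ν : S → ℝ) : ℝ := (1 / 2) * ∑ y, |μ y - ν y|

/-- The empirical distribution `μ̂_N = (1/N) Σ_{i=1}^N δ_{Y_i}` of the sample `Y`. -/
noncomputable def emp {Ω S : Type*} [Fintype S] [DecidableEq S] {N : ℕ}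
    (Y : Fin N → Ω → S) (ω : Ω) (y : S) : ℝ :=
  (1 / (N : ℝ)) * ∑ i, if Y i ω = y then 1 else 0

lemma sum_sqrt_mul_one_sub_le {S : Type*} [Fintype S] (p : S → ℝ) (hp0 : ∀ y, 0 ≤ p y)
    (hp1 : ∑ y, p y = 1) :
    ∑ y, √(p y * (1 - p y)) ≤ √((Fintype.card S : ℝ) - 1) := by
  have hp_le_one : ∀ y, p y ≤ 1 := fun y =>
    hp1 ▸ Finset.single_le_sum (fun z _ => hp0 z) (Finset.mem_univ y)
  calc ∑ y, √(p y * (1 - p y)) = ∑ y, √(p y) * √(1 - p y) :=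
        Finset.sum_congr rfl fun y _ => Real.sqrt_mul (hp0 y) _
    _ ≤ √(∑ y, p y) * √(∑ y, (1 - p y)) :=
        Real.sum_sqrt_mul_sqrt_le _ hp0 fun y => sub_nonneg.2 (hp_le_one y)
    _ = √((Fintype.card S : ℝ) - 1) := by
        simp [Finset.sum_sub_distrib, hp1]

section Moments

variable {Ω : Type*} [MeasurableSpace Ω] {P : Measure Ω} [IsProbabilityMeasure P]

lemma integral_abs_sub_integral_le_sqrt_variance {X : Ω → ℝ} (hX : MemLp X 2 P) :
    ∫ ω, |X ω - P[X]| ∂P ≤ √(Var[X; P]) := by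
  set Z : Ω → ℝ := fun ω => X ω - P[X]
  have hZ : MemLp Z 2 P := hX.sub (memLp_const _)
  -- `(E|Z|)² ≤ E Z²` is the nonnegativity of the variance of `|Z|`
  have h := variance_nonneg |Z| P
  rw [variance_eq_sub hZ.abs] at h
  have hsq : |Z| ^ 2 = fun ω => (X ω - P[X]) ^ 2 := by
    funext ω; simp [Z, sq_abs]
  rw [hsq, ← variance_eq_integral hX.aemeasurable, sub_nonneg] at h
  exact (le_abs_self _).trans (Real.abs_le_sqrt h)

lemma variance_indicator_one {A : Set Ω} (hA : MeasurableSet A) :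
    Var[A.indicator 1; P] = P.real A * (1 - P.real A) := by
  have hsq : A.indicator (1 : Ω → ℝ) ^ 2 = A.indicator 1 := by
    funext ω; by_cases h : ω ∈ A <;> simp [h]
  have hA_memLp : MemLp (A.indicator (1 : Ω → ℝ)) 2 P :=
    memLp_indicator_const 2 hA 1 (Or.inr (measure_ne_top _ _))
  rw [variance_eq_sub hA_memLp, hsq, integral_indicator_one hA]
  ring

lemma integral_abs_average_sub_le {N : ℕ} (hN : 0 < N) {X : Fin N → Ω → ℝ}
    (hX : ∀ i, MemLp (X i) 2 P) (hindep : Pairwise fun i j => X i ⟂ᵢ[P] X j) {m v : ℝ}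
    (hm : ∀ i, P[X i] = m) (hv : ∀ i, Var[X i; P] = v) :
    ∫ ω, |1 / N * ∑ i, X i ω - m| ∂P ≤ √(v / N) := by
  set A : Ω → ℝ := fun ω => 1 / N * ∑ i, X i ω
  have hA : A = (1 / N : ℝ) • ∑ i, X i := by
    funext ω; simp [A, Finset.sum_apply]
  have hA_memLp : MemLp A 2 P := hA ▸ (memLp_finsetSum' _ fun i _ => hX i).const_smul _
  have hA_mean : P[A] = m := by
    rw [integral_const_mul, integral_finsetSum _ fun i _ => (hX i).integrable one_le_two]
    simp only [hm, Finset.sum_const, Finset.card_univ, Fintype.card_fin, nsmul_eq_mul]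
    field_simp
  have hA_var : Var[A; P] = v / N := by
    rw [hA, variance_smul, IndepFun.variance_sum (fun i _ => hX i)
      fun i _ j _ hij => hindep hij]
    simp only [hv, Finset.sum_const, Finset.card_univ, Fintype.card_fin, nsmul_eq_mul]
    field_simp
  have h := integral_abs_sub_integral_le_sqrt_variance hA_memLp
  rwa [hA_mean, hA_var] at h

end Moments

section Empirical

variable {Ω S : Type*} [Fintype S] [DecidableEq S] {N : ℕ} {Y : Fin N → Ω → S}

lemma emp_eq_average_indicator (ω : Ω) (y : S) :
    emp Y ω y = 1 / N * ∑ i, (Y i ⁻¹' {y}).indicator 1 ω := by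
  classical
  simp only [emp, Set.indicator_apply, Set.mem_preimage, Set.mem_singleton_iff, Pi.one_apply]

variable [MeasurableSpace Ω] {P : Measure Ω} [IsProbabilityMeasure P]
  [MeasurableSpace S] [MeasurableSingletonClass S]

lemma integrable_emp (hY : ∀ i, Measurable (Y i)) (y : S) :
    Integrable (fun ω => emp Y ω y) P := by
  simp_rw [emp_eq_average_indicator]
  exact (integrable_finsetSum _ fun i _ =>
    (integrable_const 1).indicator (hY i (measurableSet_singleton y))).const_mul _

lemma integral_abs_emp_sub_le (hN : 0 < N) (hY : ∀ i, Measurable (Y i))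
    (hindep : Pairwise fun i j => Y i ⟂ᵢ[P] Y j) (y : S) {p : ℝ}
    (hp : ∀ i, P.real (Y i ⁻¹' {y}) = p) :
    ∫ ω, |emp Y ω y - p| ∂P ≤ √(p * (1 - p)) / √N := by
  have hA : ∀ i, MeasurableSet (Y i ⁻¹' {y}) := fun i => hY i (measurableSet_singleton y)
  have hA_memLp : ∀ i, MemLp ((Y i ⁻¹' {y}).indicator (1 : Ω → ℝ)) 2 P := fun i =>
    memLp_indicator_const 2 (hA i) 1 (Or.inr (measure_ne_top _ _))
  have hφ : Measurable (({y} : Set S).indicator (1 : S → ℝ)) :=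
    measurable_one.indicator (measurableSet_singleton y)
  simp_rw [emp_eq_average_indicator, ← Real.sqrt_div' _ (Nat.cast_nonneg N)]
  exact integral_abs_average_sub_le hN hA_memLp
    (fun i j hij => (hindep hij).comp hφ hφ)
    (fun i => (integral_indicator_one (hA i)).trans (hp i))
    (fun i => (variance_indicator_one (hA i)).trans (by rw [hp i]))

lemma integral_tv_emp (hY : ∀ i, Measurable (Y i)) (μ : S → ℝ) :
    ∫ ω, tv (emp Y ω) μ ∂P = 1 / 2 * ∑ y, ∫ ω, |emp Y ω y - μ y| ∂P := by
  have hint : ∀ y, Integrable (fun ω => |emp Y ω y - μ y|) P := fun y =>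
    ((integrable_emp hY y).sub (integrable_const _)).abs
  rw [← integral_finsetSum _ fun y _ => hint y, ← integral_const_mul]
  rfl

end Empirical

theorem expected_tv_iid_le_general
    {Ω : Type*} [MeasurableSpace Ω] (P : Measure Ω) [IsProbabilityMeasure P]
    {S : Type*} [Fintype S] [DecidableEq S] [MeasurableSpace S]
    [MeasurableSingletonClass S]
    {N : ℕ} (hN : 0 < N)
    (Y : Fin N → Ω → S) (hYmeas : ∀ i, Measurable (Y i))
    (hYindep : ProbabilityTheory.iIndepFun Y P)
    (μ : S → ℝ) (hμ0 : ∀ y, 0 ≤ μ y) (hμ1 : ∑ y, μ y = 1)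
    (hYlaw : ∀ i y, (P (Y i ⁻¹' {y})).toReal = μ y) :
    ∫ ω, tv (emp Y ω) μ ∂P ≤
      Real.sqrt ((Fintype.card S : ℝ) - 1) / (2 * Real.sqrt N) := by
  calc ∫ ω, tv (emp Y ω) μ ∂P = 1 / 2 * ∑ y, ∫ ω, |emp Y ω y - μ y| ∂P :=
        integral_tv_emp hYmeas μ
    _ ≤ 1 / 2 * ∑ y, √(μ y * (1 - μ y)) / √N := by
        gcongr with y
        exact integral_abs_emp_sub_le hN hYmeas (fun i j hij => hYindep.indepFun hij) y
          (hYlaw · y)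
    _ = (∑ y, √(μ y * (1 - μ y))) / (2 * √N) := by
        rw [← Finset.sum_div]; ring
    _ ≤ √((Fintype.card S : ℝ) - 1) / (2 * √N) := by
        gcongr
        exact sum_sqrt_mul_one_sub_le μ hμ0 hμ1

/-- If `Y_1, …, Y_N` are independent, each with law `μ`, on a finite set `S` with
`|S| = K ≥ 1`, then `E[ ‖μ̂_N − μ‖ ] ≤ √(K − 1) / (2√N)`. -/
theorem expected_tv_iid_le
    {Ω : Type*} [MeasurableSpace Ω] (P : Measure Ω) [IsProbabilityMeasure P]
    {S : Type*} [Fintype S] [DecidableEq S] [MeasurableSpace S]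
    [MeasurableSingletonClass S]
    {N : ℕ} (hN : 0 < N)
    (Y : Fin N → Ω → S) (hYmeas : ∀ i, Measurable (Y i))
    (hYindep : ProbabilityTheory.iIndepFun Y P)
    (μ : S → ℝ) (hμ0 : ∀ y, 0 ≤ μ y) (hμ1 : ∑ y, μ y = 1)
    (hYlaw : ∀ i y, (P (Y i ⁻¹' {y})).toReal = μ y)
    (hK : 1 ≤ Fintype.card S) :
    ∫ ω, tv (emp Y ω) μ ∂P ≤
      Real.sqrt ((Fintype.card S : ℝ) - 1) / (2 * Real.sqrt N) :=
  expected_tv_iid_le_general P hN Y hYmeas hYindep μ hμ0 hμ1 hYlaw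

end EmpiricalTV
end

section
/- Let (Ω, 𝔽, P) be a probability space, (M, d) and (H, ρ) metric spaces, T ∈ ℕ, and let 𝒫 be a set of policies, each policy p ∈ 𝒫 being a family (p_n)_{n=0,…,T} of L_p-Lipschitz maps p_n : M → H. Suppose Ψ : M × H → ℝ satisfies |Ψ(m,h) − Ψ(m',h')| ≤ L_Ψ (d(m,m') + ρ(h,h')). For each p ∈ 𝒫, let (ν^p_n)_{n=0,…,T} ⊂ M be deterministic and (ν^{N,p}_n)_{n=0,…,T} be M-valued random variables with d(ν^{N,p}_n, ν^p_n) and Ψ(ν^{N,p}_n, p_n(ν^{N,p}_n)) integrable, and define J(p) := Σ_{n=0}^T Ψ(ν^p_n, p_n(ν^p_n)) and J^N(p) := E[ Σ_{n=0}^T Ψ(ν^{N,p}_n, p_n(ν^{N,p}_n)) ]. Assume there is β ≥ 0 with E[ d(ν^{N,p}_n, ν^p_n) ] ≤ β for all p ∈ 𝒫 and all n. If p* minimizes J over 𝒫 and p̂ minimizes J^N over 𝒫, then 0 ≤ J^N(p*) − J^N(p̂) ≤ 2 (T+1) L_Ψ (1 + L_p) β. -/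
/-!
Abstract ε-approximation theorem: the optimality gap of the mean-field optimal
policy in the `N`-agent problem is at most `2 (T+1) L_Ψ (1 + L_p) β`, where `β`
uniformly bounds the expected distance between the `N`-agent empirical-distribution
trajectory and the mean-field trajectory.
-/

open MeasureTheory

namespace EpsilonApprox

variable {Ω M H : Type*} [MeasurableSpace Ω] [MetricSpace M] [MetricSpace H]

/-- Mean-field social cost of a policy `p`:
`J(p) = Σ_{n=0}^T Ψ(ν^p_n, p_n(ν^p_n))` along the deterministic trajectory `ν`. -/
def Jmf (T : ℕ) (Ψ : M → H → ℝ) (ν : (ℕ → M → H) → ℕ → M) (p : ℕ → M → H) : ℝ :=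
  ∑ n ∈ Finset.range (T + 1), Ψ (ν p n) (p n (ν p n))

/-- `N`-agent social cost of a policy `p`:
`J^N(p) = E[ Σ_{n=0}^T Ψ(ν^{N,p}_n, p_n(ν^{N,p}_n)) ]` along the random
trajectory `νN`. -/
noncomputable def JN (P : Measure Ω) (T : ℕ) (Ψ : M → H → ℝ)
    (νN : (ℕ → M → H) → ℕ → Ω → M) (p : ℕ → M → H) : ℝ :=
  ∫ ω, ∑ n ∈ Finset.range (T + 1), Ψ (νN p n ω) (p n (νN p n ω)) ∂P

/-- Key approximation bound: `|J^N(p) − J(p)| ≤ (T+1) L_Ψ (1+L_p) β` for `p ∈ Pol`. -/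
theorem JN_sub_Jmf_abs_le (P : Measure Ω) [IsProbabilityMeasure P] (T : ℕ)
    (Pol : Set (ℕ → M → H))
    (Ψ : M → H → ℝ) (LΨ Lp : ℝ) (hLΨ : 0 ≤ LΨ) (hLp : 0 ≤ Lp)
    (hΨ : ∀ (m m' : M) (h h' : H),
      |Ψ m h - Ψ m' h'| ≤ LΨ * (dist m m' + dist h h'))
    (hpol : ∀ p ∈ Pol, ∀ n ≤ T, ∀ m m' : M, dist (p n m) (p n m') ≤ Lp * dist m m')
    (ν : (ℕ → M → H) → ℕ → M) (νN : (ℕ → M → H) → ℕ → Ω → M)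
    (hint1 : ∀ p ∈ Pol, ∀ n ≤ T, Integrable (fun ω => dist (νN p n ω) (ν p n)) P)
    (hint2 : ∀ p ∈ Pol, ∀ n ≤ T, Integrable (fun ω => Ψ (νN p n ω) (p n (νN p n ω))) P)
    (β : ℝ)
    (hβ : ∀ p ∈ Pol, ∀ n ≤ T, ∫ ω, dist (νN p n ω) (ν p n) ∂P ≤ β)
    (p : ℕ → M → H) (hp : p ∈ Pol) :
    |JN P T Ψ νN p - Jmf T Ψ ν p| ≤ ((T : ℝ) + 1) * (LΨ * (1 + Lp) * β) := by
  have hmem : ∀ n ∈ Finset.range (T + 1), n ≤ T := fun n hn =>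
    Nat.lt_succ_iff.mp (Finset.mem_range.mp hn)
  have hJN : JN P T Ψ νN p =
      ∑ n ∈ Finset.range (T + 1), ∫ ω, Ψ (νN p n ω) (p n (νN p n ω)) ∂P := by
    unfold JN
    exact integral_finset_sum _ (fun n hn => hint2 p hp n (hmem n hn))
  have key : ∀ n ≤ T,
      |(∫ ω, Ψ (νN p n ω) (p n (νN p n ω)) ∂P) - Ψ (ν p n) (p n (ν p n))| ≤
        LΨ * (1 + Lp) * β := by
    intro n hn
    have hi2 := hint2 p hp n hn
    have hi1 := hint1 p hp n hn
    have heq : (∫ ω, Ψ (νN p n ω) (p n (νN p n ω)) ∂P) - Ψ (ν p n) (p n (ν p n)) =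
        ∫ ω, (Ψ (νN p n ω) (p n (νN p n ω)) - Ψ (ν p n) (p n (ν p n))) ∂P := by
      rw [integral_sub hi2 (integrable_const _), integral_const]
      simp
    rw [heq]
    calc |∫ ω, (Ψ (νN p n ω) (p n (νN p n ω)) - Ψ (ν p n) (p n (ν p n))) ∂P|
        ≤ ∫ ω, |Ψ (νN p n ω) (p n (νN p n ω)) - Ψ (ν p n) (p n (ν p n))| ∂P :=
        by simpa [Real.norm_eq_abs] using norm_integral_le_integral_norm (μ := P) (fun ω => Ψ (νN p n ω) (p n (νN p n ω)) - Ψ (ν p n) (p n (ν p n)))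
      _ ≤ ∫ ω, LΨ * (1 + Lp) * dist (νN p n ω) (ν p n) ∂P := by
          apply integral_mono ((hi2.sub (integrable_const _)).abs) (hi1.const_mul _)
          intro ω
          calc |Ψ (νN p n ω) (p n (νN p n ω)) - Ψ (ν p n) (p n (ν p n))|
              ≤ LΨ * (dist (νN p n ω) (ν p n) + dist (p n (νN p n ω)) (p n (ν p n))) :=
                hΨ _ _ _ _
            _ ≤ LΨ * (dist (νN p n ω) (ν p n) + Lp * dist (νN p n ω) (ν p n)) := by
                have := hpol p hp n hn (νN p n ω) (ν p n)
                nlinarith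
            _ = LΨ * (1 + Lp) * dist (νN p n ω) (ν p n) := by ring
      _ = LΨ * (1 + Lp) * ∫ ω, dist (νN p n ω) (ν p n) ∂P := integral_const_mul _ _
      _ ≤ LΨ * (1 + Lp) * β := by
          apply mul_le_mul_of_nonneg_left (hβ p hp n hn)
          positivity
  calc |JN P T Ψ νN p - Jmf T Ψ ν p|
      = |∑ n ∈ Finset.range (T + 1),
          ((∫ ω, Ψ (νN p n ω) (p n (νN p n ω)) ∂P) - Ψ (ν p n) (p n (ν p n)))| := by
        rw [hJN, Jmf, Finset.sum_sub_distrib]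
    _ ≤ ∑ n ∈ Finset.range (T + 1),
          |(∫ ω, Ψ (νN p n ω) (p n (νN p n ω)) ∂P) - Ψ (ν p n) (p n (ν p n))| :=
        Finset.abs_sum_le_sum_abs _ _
    _ ≤ ∑ n ∈ Finset.range (T + 1), LΨ * (1 + Lp) * β :=
        Finset.sum_le_sum (fun n hn => key n (hmem n hn))
    _ = ((T : ℝ) + 1) * (LΨ * (1 + Lp) * β) := by
        rw [Finset.sum_const, Finset.card_range]
        push_cast
        ring

/-- If `p*` minimizes the mean-field cost `J` over the policy class `Pol` and `p̂`
minimizes the `N`-agent cost `J^N` over `Pol`, then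
`0 ≤ J^N(p*) − J^N(p̂) ≤ 2 (T+1) L_Ψ (1 + L_p) β`. -/
theorem optimality_gap (P : Measure Ω) [IsProbabilityMeasure P] (T : ℕ)
    (Pol : Set (ℕ → M → H))
    (Ψ : M → H → ℝ) (LΨ Lp : ℝ) (hLΨ : 0 ≤ LΨ) (hLp : 0 ≤ Lp)
    (hΨ : ∀ (m m' : M) (h h' : H),
      |Ψ m h - Ψ m' h'| ≤ LΨ * (dist m m' + dist h h'))
    (hpol : ∀ p ∈ Pol, ∀ n ≤ T, ∀ m m' : M, dist (p n m) (p n m') ≤ Lp * dist m m')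
    (ν : (ℕ → M → H) → ℕ → M) (νN : (ℕ → M → H) → ℕ → Ω → M)
    (hint1 : ∀ p ∈ Pol, ∀ n ≤ T, Integrable (fun ω => dist (νN p n ω) (ν p n)) P)
    (hint2 : ∀ p ∈ Pol, ∀ n ≤ T, Integrable (fun ω => Ψ (νN p n ω) (p n (νN p n ω))) P)
    (β : ℝ) (hβ0 : 0 ≤ β)
    (hβ : ∀ p ∈ Pol, ∀ n ≤ T, ∫ ω, dist (νN p n ω) (ν p n) ∂P ≤ β)
    (pstar phat : ℕ → M → H)
    (hstar : pstar ∈ Pol ∧ ∀ q ∈ Pol, Jmf T Ψ ν pstar ≤ Jmf T Ψ ν q)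
    (hhat : phat ∈ Pol ∧ ∀ q ∈ Pol, JN P T Ψ νN phat ≤ JN P T Ψ νN q) :
    0 ≤ JN P T Ψ νN pstar - JN P T Ψ νN phat ∧
      JN P T Ψ νN pstar - JN P T Ψ νN phat ≤
        2 * ((T : ℝ) + 1) * LΨ * (1 + Lp) * β := by
  have B1 := JN_sub_Jmf_abs_le P T Pol Ψ LΨ Lp hLΨ hLp hΨ hpol ν νN hint1 hint2 β hβ
    pstar hstar.1
  have B2 := JN_sub_Jmf_abs_le P T Pol Ψ LΨ Lp hLΨ hLp hΨ hpol ν νN hint1 hint2 β hβ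
    phat hhat.1
  have h1 := hhat.2 pstar hstar.1
  have h2 := hstar.2 phat hhat.1
  constructor
  · linarith
  · have a1 := abs_le.mp B1
    have a2 := abs_le.mp B2
    linarith

end EpsilonApprox
end
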